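/- Let m be a positive integer with m ≥ 2, let z₁, …, z_m be distinct complex numbers with Im(z_l) > 0 for each l, and let w₁, …, w_m ∈ ℂ satisfy the Vandermonde moment conditions Σ_{l=1}^m w_l z_l^j = δ_{j0} for j = 0, 1, …, m − 1. Define K : ℝ → ℝ by K(x) = −(1/π) Σ_{l=1}^m Im(w_l/(x + z_l)). Then for every integer j with 1 ≤ j ≤ m − 1, the function x ↦ x^j K(x) is Lebesgue integrable on ℝ and ∫_ℝ x^j K(x) dx = 0. -/

import Mathlib

/-! Dividing `x ^ j` by `x + z_l` and using the moment conditions of order `< j` turns `x ^ j K(x)`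
into `-(1/π) Im (x ^ (j-1) + Σ_l c_l / (x + z_l))` with `c_l = w_l (-z_l) ^ j`, whose polynomial
part is real. The moment condition of order `j` gives `Σ_l c_l = 0`, so the remaining sum is a
combination of differences `1/(x + z) - 1/(x + z')`. Each of these decays like `x⁻²`, and its
integral vanishes because it is the derivative of `log ((x + z)/(x + z'))`, which tends to `0` at
`±∞` and is smooth since a quotient of two points of the upper half-plane avoids `(-∞, 0]`. -/

open MeasureTheory Complex Filter Topology Bornology

namespace Complex

lemma ofReal_add_ne_zero {z : ℂ} (hz : z.im ≠ 0) (x : ℝ) : (x : ℂ) + z ≠ 0 := by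
  intro h
  apply hz
  simpa using congrArg im h

lemma integrable_norm_inv_ofReal_add_sq {z : ℂ} (hz : z.im ≠ 0) :
    Integrable fun x : ℝ => ‖((x : ℂ) + z)⁻¹‖ ^ 2 := by
  have h := ((integrable_inv_one_add_sq.comp_div hz).comp_add_right z.re).const_mul (z.im ^ 2)⁻¹
  refine h.congr (Eventually.of_forall fun x => ?_)
  dsimp only
  rw [norm_inv, inv_pow, Complex.sq_norm, normSq_apply]
  simp only [add_re, add_im, ofReal_re, ofReal_im, zero_add]
  field_simp
  ring

lemma integrable_inv_ofReal_add_sub_inv_ofReal_add {z w : ℂ} (hz : z.im ≠ 0) (hw : w.im ≠ 0) :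
    Integrable fun x : ℝ => ((x : ℂ) + z)⁻¹ - ((x : ℂ) + w)⁻¹ := by
  have hcont (u : ℂ) (hu : u.im ≠ 0) : Continuous fun x : ℝ => ((x : ℂ) + u)⁻¹ :=
    (continuous_ofReal.add continuous_const).inv₀ (ofReal_add_ne_zero hu)
  refine (((integrable_norm_inv_ofReal_add_sq hz).add
    (integrable_norm_inv_ofReal_add_sq hw)).const_mul ‖w - z‖).mono'
    ((hcont z hz).sub (hcont w hw)).aestronglyMeasurable (Eventually.of_forall fun x => ?_)
  set a := ‖((x : ℂ) + z)⁻¹‖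
  set b := ‖((x : ℂ) + w)⁻¹‖
  have hdiff : ((x : ℂ) + z)⁻¹ - ((x : ℂ) + w)⁻¹ =
      (w - z) * (((x : ℂ) + z)⁻¹ * ((x : ℂ) + w)⁻¹) := by
    rw [inv_sub_inv (ofReal_add_ne_zero hz x) (ofReal_add_ne_zero hw x), div_eq_mul_inv, mul_inv]
    ring
  rw [hdiff, norm_mul, norm_mul]
  have hab : a * b ≤ a ^ 2 + b ^ 2 := by
    nlinarith [two_mul_le_add_sq a b, norm_nonneg ((x : ℂ) + z)⁻¹, norm_nonneg ((x : ℂ) + w)⁻¹]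
  exact mul_le_mul_of_nonneg_left hab (norm_nonneg _)

lemma div_mem_slitPlane_of_im_pos {u v : ℂ} (hu : 0 < u.im) (hv : 0 < v.im) :
    u / v ∈ slitPlane := by
  rw [mem_slitPlane_iff]
  by_contra! h
  have hv0 : v ≠ 0 := ne_of_apply_ne im (by simpa using hv.ne')
  have : u.im = (u / v).re * v.im := by
    conv_lhs => rw [← div_mul_cancel₀ u hv0, mul_im, h.2, zero_mul, add_zero]
  nlinarith

lemma tendsto_div_ofReal_add {z w : ℂ} (hw : w.im ≠ 0) {l : Filter ℝ}
    (hl : Tendsto ((↑) : ℝ → ℂ) l (cobounded ℂ)) :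
    Tendsto (fun x : ℝ => ((x : ℂ) + z) / ((x : ℂ) + w)) l (𝓝 1) := by
  have hinv : Tendsto (fun x : ℝ => ((x : ℂ) + w)⁻¹) l (𝓝 0) :=
    tendsto_inv₀_cobounded.comp ((tendsto_add_const_cobounded w).comp hl)
  have h := (hinv.const_mul (z - w)).const_add 1
  rw [mul_zero, add_zero] at h
  refine h.congr fun x => ?_
  have := ofReal_add_ne_zero hw x
  field_simp
  ring

lemma hasDerivAt_log_div_ofReal_add {z w : ℂ} (hz : 0 < z.im) (hw : 0 < w.im) (x : ℝ) :
    HasDerivAt (fun t : ℝ => log (((t : ℂ) + z) / ((t : ℂ) + w)))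
      (((x : ℂ) + z)⁻¹ - ((x : ℂ) + w)⁻¹) x := by
  have hz0 := ofReal_add_ne_zero hz.ne' x
  have hw0 := ofReal_add_ne_zero hw.ne' x
  have hshift (u : ℂ) : HasDerivAt (fun t : ℝ => (t : ℂ) + u) 1 x :=
    (ofRealCLM.hasDerivAt (x := x)).add_const u
  have hquot : HasDerivAt (fun t : ℝ => ((t : ℂ) + z) / ((t : ℂ) + w))
      ((1 * ((x : ℂ) + w) - ((x : ℂ) + z) * 1) / ((x : ℂ) + w) ^ 2) x :=
    (hshift z).div (hshift w) hw0
  convert hquot.clog_real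
    (div_mem_slitPlane_of_im_pos (by simpa using hz) (by simpa using hw)) using 1
  field_simp

lemma integral_inv_ofReal_add_sub_inv_ofReal_add {z w : ℂ} (hz : 0 < z.im) (hw : 0 < w.im) :
    ∫ x : ℝ, (((x : ℂ) + z)⁻¹ - ((x : ℂ) + w)⁻¹) = 0 := by
  have hlim {l : Filter ℝ} (hl : Tendsto ((↑) : ℝ → ℂ) l (cobounded ℂ)) :
      Tendsto (fun x : ℝ => log (((x : ℂ) + z) / ((x : ℂ) + w))) l (𝓝 0) := by
    simpa using (tendsto_div_ofReal_add (z := z) hw.ne' hl).clog one_mem_slitPlane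
  rw [integral_of_hasDerivAt_of_tendsto (hasDerivAt_log_div_ofReal_add hz hw)
    (integrable_inv_ofReal_add_sub_inv_ofReal_add hz.ne' hw.ne')
    (hlim (RCLike.tendsto_ofReal_atBot_cobounded ℂ))
    (hlim (RCLike.tendsto_ofReal_atTop_cobounded ℂ)), sub_zero]

lemma integrable_sum_div_ofReal_add_and_integral_eq_zero {ι : Type*} [Fintype ι] {c z : ι → ℂ}
    (hz : ∀ l, 0 < (z l).im) (hc : ∑ l, c l = 0) :
    Integrable (fun x : ℝ => ∑ l, c l / ((x : ℂ) + z l)) ∧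
      ∫ x : ℝ, ∑ l, c l / ((x : ℂ) + z l) = 0 := by
  have hI : (0 : ℝ) < I.im := by simp
  have hpair : (fun x : ℝ => ∑ l, c l / ((x : ℂ) + z l)) =
      fun x : ℝ => ∑ l, c l * (((x : ℂ) + z l)⁻¹ - ((x : ℂ) + I)⁻¹) := by
    ext x
    simp only [mul_sub, Finset.sum_sub_distrib, ← Finset.sum_mul, hc, zero_mul, sub_zero,
      div_eq_mul_inv]
  have hterm (l : ι) :=
    (integrable_inv_ofReal_add_sub_inv_ofReal_add (hz l).ne' hI.ne').const_mul (c l)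
  rw [hpair, integral_finsetSum _ fun l _ => hterm l]
  refine ⟨integrable_finsetSum _ fun l _ => hterm l, Finset.sum_eq_zero fun l _ => ?_⟩
  rw [integral_const_mul, integral_inv_ofReal_add_sub_inv_ofReal_add (hz l) hI, mul_zero]

end Complex

lemma sum_pow_mul_div_add_eq {ι 𝕜 : Type*} [Fintype ι] [Field 𝕜] {z w : ι → 𝕜} {j : ℕ}
    (hj : j ≠ 0) (hmom : ∀ i < j, ∑ l, w l * z l ^ i = if i = 0 then 1 else 0) {x : 𝕜}
    (hx : ∀ l, x + z l ≠ 0) :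
    ∑ l, x ^ j * (w l / (x + z l)) = x ^ (j - 1) + ∑ l, w l * (-z l) ^ j / (x + z l) := by
  have hdiv (l : ι) : x ^ j * (w l / (x + z l)) =
      w l * ∑ i ∈ Finset.range j, (-z l) ^ i * x ^ (j - 1 - i) + w l * (-z l) ^ j / (x + z l) := by
    have hgeom := geom_sum₂_mul x (-z l) j
    rw [geom_sum₂_comm, sub_neg_eq_add, eq_sub_iff_add_eq] at hgeom
    rw [← hgeom]
    field_simp [hx l]
  have hquot : ∑ l, w l * ∑ i ∈ Finset.range j, (-z l) ^ i * x ^ (j - 1 - i) = x ^ (j - 1) :=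
    calc ∑ l, w l * ∑ i ∈ Finset.range j, (-z l) ^ i * x ^ (j - 1 - i)
        = ∑ i ∈ Finset.range j, (-1) ^ i * x ^ (j - 1 - i) * ∑ l, w l * z l ^ i := by
          simp only [Finset.mul_sum]
          rw [Finset.sum_comm]
          refine Finset.sum_congr rfl fun i _ => Finset.sum_congr rfl fun l _ => ?_
          rw [neg_pow (z l)]
          ring
      _ = ∑ i ∈ Finset.range j, (-1) ^ i * x ^ (j - 1 - i) * if i = 0 then 1 else 0 :=
          Finset.sum_congr rfl fun i hi => by rw [hmom i (Finset.mem_range.1 hi)]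
      _ = x ^ (j - 1) := by simp [Nat.pos_of_ne_zero hj]
  rw [Finset.sum_congr rfl fun l _ => hdiv l, Finset.sum_add_distrib, hquot]

theorem rational_kernel_vanishing_moments_general
    (m : ℕ)
    (z w : Fin m → ℂ)
    (hz_upper : ∀ l, 0 < (z l).im)
    (hmom : ∀ j : ℕ, j < m → ∑ l, w l * z l ^ j = if j = 0 then 1 else 0)
    (K : ℝ → ℝ)
    (hK : ∀ x : ℝ, K x = -(1 / Real.pi) * ∑ l, (w l / ((x : ℂ) + z l)).im) :
    ∀ j : ℕ, 1 ≤ j → j ≤ m - 1 →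
      Integrable (fun x : ℝ => x ^ j * K x) ∧ ∫ x : ℝ, x ^ j * K x = 0 := by
  intro j hj1 hj2
  have hj0 : j ≠ 0 := Nat.one_le_iff_ne_zero.mp hj1
  set c : Fin m → ℂ := fun l => w l * (-z l) ^ j
  have hc : ∑ l, c l = 0 := by
    simp only [c, neg_pow (z _), mul_left_comm (w _), ← Finset.mul_sum, hmom j (by omega), hj0,
      if_false, mul_zero]
  obtain ⟨hint, hzero⟩ := integrable_sum_div_ofReal_add_and_integral_eq_zero hz_upper hc
  have hpoint (x : ℝ) : x ^ j * K x = -(1 / Real.pi) * (∑ l, c l / ((x : ℂ) + z l)).im := by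
    have h := congrArg im <| sum_pow_mul_div_add_eq hj0 (fun i hi => hmom i (by omega))
      fun l => ofReal_add_ne_zero (hz_upper l).ne' x
    simp only [← ofReal_pow, im_sum, im_ofReal_mul, add_im, ofReal_im, zero_add] at h
    rw [hK, im_sum, mul_left_comm, Finset.mul_sum, h]
  simp_rw [hpoint]
  refine ⟨hint.im.const_mul _, ?_⟩
  have him : ∫ x : ℝ, (∑ l, c l / ((x : ℂ) + z l)).im =
      (∫ x : ℝ, ∑ l, c l / ((x : ℂ) + z l)).im := integral_im hint
  rw [integral_const_mul, him, hzero, zero_im, mul_zero]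

/-- **Vanishing moments of the rational high-order kernel.**
For distinct poles `z₁, …, z_m` (`m ≥ 2`) in the open upper half-plane and weights
`w₁, …, w_m` satisfying the Vandermonde moment conditions `Σ_l w_l z_l^j = δ_{j0}` for
`j = 0, …, m − 1`, the kernel `K(x) = −(1/π) Σ_l Im(w_l/(x + z_l))` satisfies:
for every `1 ≤ j ≤ m − 1`, `x ↦ x^j K(x)` is Lebesgue integrable and
`∫ x^j K(x) dx = 0`. -/
theorem rational_kernel_vanishing_moments
    (m : ℕ) (hm : 2 ≤ m)
    (z w : Fin m → ℂ)
    (hz_distinct : Function.Injective z)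
    (hz_upper : ∀ l, 0 < (z l).im)
    (hmom : ∀ j : ℕ, j < m → ∑ l, w l * z l ^ j = if j = 0 then 1 else 0)
    (K : ℝ → ℝ)
    (hK : ∀ x : ℝ, K x = -(1 / Real.pi) * ∑ l, (w l / ((x : ℂ) + z l)).im) :
    ∀ j : ℕ, 1 ≤ j → j ≤ m - 1 →
      Integrable (fun x : ℝ => x ^ j * K x) ∧ ∫ x : ℝ, x ^ j * K x = 0 :=
  rational_kernel_vanishing_moments_general m z w hz_upper hmom K hK
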